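/- arXiv:1605.08558 — 2 statements merged into one kernel-verified Lean document; each statement's English description precedes it below -/
import Mathlib

section
/- Let ν be a Borel measure on ℝ₊^I \ {0} that is homogeneous of order -β (i.e., ν(tA) = t^(-β) ν(A) for all t > 0 and Borel sets A bounded away from 0), and let r₁, r₂ be continuous 1-homogeneous risk functionals strictly positive ν-almost everywhere. Then the angular measures σ_{r₁}(B) = ν{x : r₁(x) > 1, x/‖x‖ ∈ B} and σ_{r₂}(B) = ν{x : r₂(x) > 1, x/‖x‖ ∈ B} on the unit sphere satisfy σ_{r₁}(dw) = (r₁(w)/r₂(w))^β σ_{r₂}(dw), i.e., for every Borel B on the sphere, σ_{r₁}(B) = ∫_B (r₁(w)/r₂(w))^β σ_{r₂}(dw). -/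
/-!
Homogeneity of `ν` and of `r₂` gives `ν {r₂ > s, x / ‖x‖ ∈ B} = s ^ (-β) σ_{r₂}(B)`. If `r₁ ≤ b r₂`
on a set `B` of directions, the event `{r₁ > 1}` lies inside `{r₂ > 1 / b}`, so
`σ_{r₁}(B) ≤ b ^ β σ_{r₂}(B)`. Slicing `B` according to the value of `r₁ / r₂` in geometric steps
of ratio `c > 1` and letting `c → 1` gives `σ_{r₁} ≤ (r₁ / r₂) ^ β σ_{r₂}`; the same inequality with
`r₁` and `r₂` exchanged is the converse, because the two densities are reciprocal.
-/

open MeasureTheory NormedSpace Filter Topology Set Pointwise Function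
open scoped ENNReal

theorem ENNReal.le_of_forall_one_lt_le_ofReal_rpow_mul {a b : ℝ≥0∞} {β : ℝ}
    (h : ∀ c : ℝ, 1 < c → a ≤ ENNReal.ofReal (c ^ β) * b) : a ≤ b := by
  have hcont : ContinuousAt (fun c : ℝ => ENNReal.ofReal (c ^ β)) 1 :=
    ENNReal.continuous_ofReal.continuousAt.comp
      (Real.continuousAt_rpow_const 1 β (Or.inl one_ne_zero))
  have hlim : Tendsto (fun c : ℝ => ENNReal.ofReal (c ^ β) * b) (𝓝[>] 1) (𝓝 b) := by
    simpa using ENNReal.Tendsto.mul_const (hcont.tendsto.mono_left nhdsWithin_le_nhds)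
      (Or.inl (by simp))
  exact ge_of_tendsto hlim (eventually_nhdsWithin_of_forall h)

theorem MeasureTheory.Measure.eq_withDensity_of_le_withDensity {α : Type*} [MeasurableSpace α]
    {μ ν : Measure α} {f g : α → ℝ≥0∞} (hf : Measurable f) (hg : Measurable g)
    (hμ : μ ≤ ν.withDensity f) (hν : ν ≤ μ.withDensity g) (hgf : g * f =ᵐ[μ] 1) :
    μ = ν.withDensity f := by
  refine le_antisymm hμ ?_
  calc ν.withDensity f ≤ (μ.withDensity g).withDensity f :=
        Measure.le_iff.2 fun s hs => by
          simp only [withDensity_apply _ hs]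
          exact lintegral_mono' (Measure.restrict_mono subset_rfl hν) le_rfl
    _ = μ := by rw [← withDensity_mul _ hg hf, withDensity_congr_ae hgf, withDensity_one]

theorem pairwise_disjoint_Ioc_zpow₀ {K : Type*} [Field K] [LinearOrder K] [IsStrictOrderedRing K]
    {c : K} (hc : 1 ≤ c) : Pairwise (Disjoint on fun k : ℤ => Ioc (c ^ k) (c ^ (k + 1))) :=
  (pairwise_disjoint_on _).2 fun _ _ hkl =>
    Ioc_disjoint_Ioc_of_le (zpow_le_zpow_right₀ hc (Int.add_one_le_of_lt hkl))

variable {E : Type*} [NormedAddCommGroup E] [NormedSpace ℝ E]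

def IsPosHomogeneous (r : E → ℝ) : Prop :=
  ∀ (a : ℝ) (x : E), 0 < a → r (a • x) = a * r x

namespace IsPosHomogeneous

variable {r : E → ℝ}

theorem map_zero (hr : IsPosHomogeneous r) : r 0 = 0 := by
  have h := hr 2 0 two_pos
  rw [smul_zero] at h
  linarith

theorem map_normalize (hr : IsPosHomogeneous r) (x : E) : r (normalize x) = ‖x‖⁻¹ * r x := by
  rcases eq_or_ne x 0 with rfl | hx
  · simp [hr.map_zero]
  · exact hr _ _ (inv_pos.2 (norm_pos_iff.2 hx))

theorem norm_mul_map_normalize (hr : IsPosHomogeneous r) (x : E) :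
    ‖x‖ * r (normalize x) = r x := by
  rcases eq_or_ne x 0 with rfl | hx
  · simp [hr.map_zero]
  · rw [hr.map_normalize, ← mul_assoc, mul_inv_cancel₀ (norm_ne_zero_iff.2 hx), one_mul]

end IsPosHomogeneous

def exceedanceSet (r : E → ℝ) (s : ℝ) (B : Set E) : Set E :=
  {x | s < r x ∧ normalize x ∈ B}

section exceedanceSet

variable {r r₁ r₂ : E → ℝ} {s : ℝ} {B : Set E}

theorem smul_exceedanceSet (hr : IsPosHomogeneous r) {t : ℝ} (ht : 0 < t) :
    t • exceedanceSet r s B = exceedanceSet r (t * s) B := by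
  ext x
  rw [mem_smul_set_iff_inv_smul_mem₀ ht.ne']
  simp only [exceedanceSet, mem_ofPred_eq, hr _ _ (inv_pos.2 ht),
    normalize_smul_of_pos (inv_pos.2 ht), lt_inv_mul_iff₀ ht]

theorem measurableSet_exceedanceSet [MeasurableSpace E] [BorelSpace E] (hr : Measurable r)
    (hB : MeasurableSet B) : MeasurableSet (exceedanceSet r s B) :=
  (measurableSet_lt measurable_const hr).inter
    ((measurable_norm.inv.smul measurable_id : Measurable fun x : E => normalize x) hB)

theorem exceedanceSet_subset_of_le_mul (hr₁ : IsPosHomogeneous r₁) (hr₂ : IsPosHomogeneous r₂)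
    {b : ℝ} (hb : 0 < b) (h : ∀ w ∈ B, r₁ w ≤ b * r₂ w) :
    exceedanceSet r₁ 1 B ⊆ exceedanceSet r₂ b⁻¹ B := by
  rintro x ⟨hx, hxB⟩
  refine ⟨(inv_lt_iff_one_lt_mul₀' hb).2 (hx.trans_le ?_), hxB⟩
  rw [← hr₁.norm_mul_map_normalize, ← hr₂.norm_mul_map_normalize, mul_left_comm]
  exact mul_le_mul_of_nonneg_left (h _ hxB) (norm_nonneg x)

end exceedanceSet

variable [MeasurableSpace E]

def MeasureTheory.Measure.IsHomogeneous (ν : Measure E) (α : ℝ) : Prop :=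
  ∀ t : ℝ, 0 < t → ∀ A : Set E, MeasurableSet A → ν (t • A) = ENNReal.ofReal (t ^ α) * ν A

theorem MeasureTheory.Measure.IsHomogeneous.measure_exceedanceSet [BorelSpace E]
    {ν : Measure E} {α : ℝ} (hν : ν.IsHomogeneous α) {r : E → ℝ} (hr : IsPosHomogeneous r)
    (hrm : Measurable r) {B : Set E} (hB : MeasurableSet B) {s : ℝ} (hs : 0 < s) :
    ν (exceedanceSet r s B) = ENNReal.ofReal (s ^ α) * ν (exceedanceSet r 1 B) := by
  rw [← hν s hs _ (measurableSet_exceedanceSet hrm hB), smul_exceedanceSet hr hs, mul_one]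

def IsAngularMeasure (ν : Measure E) (r : E → ℝ) (σ : Measure E) : Prop :=
  ∀ B : Set E, MeasurableSet B → σ B = ν (exceedanceSet r 1 B)

namespace IsAngularMeasure

variable {ν σ₁ σ₂ : Measure E} {β : ℝ} {r₁ r₂ : E → ℝ}

theorem ae_pos (hσ₁ : IsAngularMeasure ν r₁ σ₁) (hr₁ : IsPosHomogeneous r₁)
    (hr₂ : IsPosHomogeneous r₂) (hr₁m : Measurable r₁) (hr₂m : Measurable r₂)
    (hr₂_pos : ∀ᵐ x ∂ν, 0 < r₂ x) : ∀ᵐ w ∂σ₁, 0 < r₁ w ∧ 0 < r₂ w := by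
  set S := {w | 0 < r₁ w ∧ 0 < r₂ w}
  have hS : MeasurableSet S :=
    (measurableSet_lt measurable_const hr₁m).inter (measurableSet_lt measurable_const hr₂m)
  change σ₁ Sᶜ = 0
  rw [hσ₁ _ hS.compl]
  refine measure_mono_null ?_ (ae_iff.1 hr₂_pos)
  rintro x ⟨hx₁, hxS⟩ hx₂
  have hx : x ≠ 0 := by
    rintro rfl
    rw [hr₁.map_zero] at hx₁
    exact zero_lt_one.not_gt hx₁
  have hnorm : 0 < ‖x‖⁻¹ := inv_pos.2 (norm_pos_iff.2 hx)
  exact hxS ⟨by rw [hr₁.map_normalize]; positivity, by rw [hr₂.map_normalize]; positivity⟩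

variable [BorelSpace E]

theorem le_ofReal_rpow_mul (hν : ν.IsHomogeneous (-β)) (hσ₁ : IsAngularMeasure ν r₁ σ₁)
    (hσ₂ : IsAngularMeasure ν r₂ σ₂) (hr₁ : IsPosHomogeneous r₁) (hr₂ : IsPosHomogeneous r₂)
    (hr₂m : Measurable r₂) {B : Set E} (hB : MeasurableSet B) {b : ℝ} (hb : 0 < b)
    (h : ∀ w ∈ B, r₁ w ≤ b * r₂ w) :
    σ₁ B ≤ ENNReal.ofReal (b ^ β) * σ₂ B :=
  calc σ₁ B = ν (exceedanceSet r₁ 1 B) := hσ₁ B hB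
    _ ≤ ν (exceedanceSet r₂ b⁻¹ B) := measure_mono (exceedanceSet_subset_of_le_mul hr₁ hr₂ hb h)
    _ = ENNReal.ofReal (b ^ β) * σ₂ B := by
      rw [hν.measure_exceedanceSet hr₂ hr₂m hB (inv_pos.2 hb), Real.inv_rpow hb.le,
        Real.rpow_neg hb.le, inv_inv, hσ₂ B hB]

theorem le_ofReal_rpow_mul_withDensity (hβ : 0 ≤ β) (hν : ν.IsHomogeneous (-β))
    (hσ₁ : IsAngularMeasure ν r₁ σ₁) (hσ₂ : IsAngularMeasure ν r₂ σ₂)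
    (hr₁ : IsPosHomogeneous r₁) (hr₂ : IsPosHomogeneous r₂) (hr₁m : Measurable r₁)
    (hr₂m : Measurable r₂) (hr₂_pos : ∀ᵐ x ∂ν, 0 < r₂ x) {c : ℝ} (hc : 1 < c)
    {B : Set E} (hB : MeasurableSet B) :
    σ₁ B ≤ ENNReal.ofReal (c ^ β) *
      σ₂.withDensity (fun w => ENNReal.ofReal ((r₁ w / r₂ w) ^ β)) B := by
  set τ := σ₂.withDensity fun w => ENNReal.ofReal ((r₁ w / r₂ w) ^ β)
  have hc₀ : 0 < c := zero_lt_one.trans hc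
  set P : ℤ → Set E := fun k =>
    B ∩ {w | 0 < r₂ w} ∩ (fun w => r₁ w / r₂ w) ⁻¹' Ioc (c ^ k) (c ^ (k + 1))
  have hPm : ∀ k, MeasurableSet (P k) := fun k =>
    (hB.inter (measurableSet_lt measurable_const hr₂m)).inter
      ((hr₁m.div hr₂m) measurableSet_Ioc)
  have hPdisj : Pairwise (Disjoint on P) := fun k l hkl =>
    ((pairwise_disjoint_Ioc_zpow₀ hc.le hkl).preimage _).mono inter_subset_right inter_subset_right
  have hPcover : B ≤ᵐ[σ₁] ⋃ k, P k := by
    filter_upwards [hσ₁.ae_pos hr₁ hr₂ hr₁m hr₂m hr₂_pos] with w ⟨h₁, h₂⟩ hwB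
    obtain ⟨k, hk⟩ := exists_mem_Ioc_zpow (div_pos h₁ h₂) hc
    exact mem_iUnion.2 ⟨k, ⟨hwB, h₂⟩, hk⟩
  have hPbound : ∀ k, σ₁ (P k) ≤ ENNReal.ofReal (c ^ β) * τ (P k) := fun k =>
    calc σ₁ (P k) ≤ ENNReal.ofReal ((c ^ (k + 1)) ^ β) * σ₂ (P k) :=
          hσ₁.le_ofReal_rpow_mul hν hσ₂ hr₁ hr₂ hr₂m (hPm k) (zpow_pos hc₀ _)
            fun w ⟨⟨_, h₂⟩, _, hle⟩ => (div_le_iff₀ h₂).1 hle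
      _ = ENNReal.ofReal (c ^ β) * (ENNReal.ofReal ((c ^ k) ^ β) * σ₂ (P k)) := by
          rw [zpow_add_one₀ hc₀.ne', Real.mul_rpow (zpow_pos hc₀ k).le hc₀.le,
            ENNReal.ofReal_mul (by positivity), mul_comm (ENNReal.ofReal _), mul_assoc]
      _ ≤ ENNReal.ofReal (c ^ β) * τ (P k) := by
          gcongr
          rw [withDensity_apply _ (hPm k), ← setLIntegral_const]
          exact setLIntegral_mono' (hPm k) fun w ⟨_, hlt, _⟩ =>
            ENNReal.ofReal_le_ofReal (Real.rpow_le_rpow (zpow_pos hc₀ k).le hlt.le hβ)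
  calc σ₁ B ≤ σ₁ (⋃ k, P k) := measure_mono_ae hPcover
    _ = ∑' k, σ₁ (P k) := measure_iUnion hPdisj hPm
    _ ≤ ∑' k, ENNReal.ofReal (c ^ β) * τ (P k) := ENNReal.tsum_le_tsum hPbound
    _ = ENNReal.ofReal (c ^ β) * τ (⋃ k, P k) := by
      rw [ENNReal.tsum_mul_left, measure_iUnion hPdisj hPm]
    _ ≤ ENNReal.ofReal (c ^ β) * τ B := by
      gcongr
      exact iUnion_subset fun k => inter_subset_left.trans inter_subset_left

theorem le_withDensity (hβ : 0 ≤ β) (hν : ν.IsHomogeneous (-β))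
    (hσ₁ : IsAngularMeasure ν r₁ σ₁) (hσ₂ : IsAngularMeasure ν r₂ σ₂)
    (hr₁ : IsPosHomogeneous r₁) (hr₂ : IsPosHomogeneous r₂) (hr₁m : Measurable r₁)
    (hr₂m : Measurable r₂) (hr₂_pos : ∀ᵐ x ∂ν, 0 < r₂ x) :
    σ₁ ≤ σ₂.withDensity fun w => ENNReal.ofReal ((r₁ w / r₂ w) ^ β) :=
  Measure.le_iff.2 fun _ hB => ENNReal.le_of_forall_one_lt_le_ofReal_rpow_mul fun _ hc =>
    hσ₁.le_ofReal_rpow_mul_withDensity hβ hν hσ₂ hr₁ hr₂ hr₁m hr₂m hr₂_pos hc hB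

end IsAngularMeasure

theorem angular_measure_change_of_risk_general {I : ℕ}
    (ν : Measure (Fin I → ℝ)) (β : ℝ) (hβ : 0 < β)
    (hν_hom : ∀ t : ℝ, 0 < t → ∀ A : Set (Fin I → ℝ), MeasurableSet A →
      ν (t • A) = ENNReal.ofReal (t ^ (-β)) * ν A)
    (r₁ r₂ : (Fin I → ℝ) → ℝ)
    (hr₁_cont : Continuous r₁) (hr₂_cont : Continuous r₂)
    (hr₁_hom : ∀ (a : ℝ) (x : Fin I → ℝ), 0 < a → r₁ (a • x) = a * r₁ x)
    (hr₂_hom : ∀ (a : ℝ) (x : Fin I → ℝ), 0 < a → r₂ (a • x) = a * r₂ x)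
    (hr₁_pos : ∀ᵐ x ∂ν, 0 < r₁ x) (hr₂_pos : ∀ᵐ x ∂ν, 0 < r₂ x)
    (σ₁ σ₂ : Measure (Fin I → ℝ))
    (hσ₁ : ∀ B : Set (Fin I → ℝ), MeasurableSet B →
      σ₁ B = ν {x | 1 < r₁ x ∧ ‖x‖⁻¹ • x ∈ B})
    (hσ₂ : ∀ B : Set (Fin I → ℝ), MeasurableSet B →
      σ₂ B = ν {x | 1 < r₂ x ∧ ‖x‖⁻¹ • x ∈ B}) :
    ∀ B : Set (Fin I → ℝ), MeasurableSet B →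
      σ₁ B = ∫⁻ w in B, ENNReal.ofReal ((r₁ w / r₂ w) ^ β) ∂σ₂ := by
  intro B hB
  have hr₁m := hr₁_cont.measurable
  have hr₂m := hr₂_cont.measurable
  have hσ : σ₁ = σ₂.withDensity fun w => ENNReal.ofReal ((r₁ w / r₂ w) ^ β) := by
    refine Measure.eq_withDensity_of_le_withDensity (by fun_prop) (by fun_prop)
      (IsAngularMeasure.le_withDensity hβ.le hν_hom hσ₁ hσ₂ hr₁_hom hr₂_hom hr₁m hr₂m hr₂_pos)
      (IsAngularMeasure.le_withDensity hβ.le hν_hom hσ₂ hσ₁ hr₂_hom hr₁_hom hr₂m hr₁m hr₁_pos) ?_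
    filter_upwards [IsAngularMeasure.ae_pos hσ₁ hr₁_hom hr₂_hom hr₁m hr₂m hr₂_pos]
      with w ⟨h₁, h₂⟩
    have hρ : 0 < r₁ w / r₂ w := div_pos h₁ h₂
    rw [Pi.mul_apply, Pi.one_apply, ← inv_div, Real.inv_rpow hρ.le,
      ← ENNReal.ofReal_mul (by positivity), inv_mul_cancel₀ (by positivity), ENNReal.ofReal_one]
  rw [hσ, withDensity_apply _ hB]

/-- Relation between the angular measures of two risk functionals for a
(-β)-homogeneous limit measure ν : σ_{r₁}(dw) = (r₁(w)/r₂(w))^β σ_{r₂}(dw). -/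
theorem angular_measure_change_of_risk {I : ℕ}
    (ν : Measure (Fin I → ℝ)) (β : ℝ) (hβ : 0 < β)
    (hν_hom : ∀ t : ℝ, 0 < t → ∀ A : Set (Fin I → ℝ), MeasurableSet A →
      ν (t • A) = ENNReal.ofReal (t ^ (-β)) * ν A)
    (hν_orthant : ∀ᵐ x ∂ν, ∀ i, 0 ≤ x i)
    (r₁ r₂ : (Fin I → ℝ) → ℝ)
    (hr₁_cont : Continuous r₁) (hr₂_cont : Continuous r₂)
    (hr₁_hom : ∀ (a : ℝ) (x : Fin I → ℝ), 0 < a → r₁ (a • x) = a * r₁ x)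
    (hr₂_hom : ∀ (a : ℝ) (x : Fin I → ℝ), 0 < a → r₂ (a • x) = a * r₂ x)
    (hr₁_pos : ∀ᵐ x ∂ν, 0 < r₁ x) (hr₂_pos : ∀ᵐ x ∂ν, 0 < r₂ x)
    (σ₁ σ₂ : Measure (Fin I → ℝ))
    (hσ₁ : ∀ B : Set (Fin I → ℝ), MeasurableSet B →
      σ₁ B = ν {x | 1 < r₁ x ∧ ‖x‖⁻¹ • x ∈ B})
    (hσ₂ : ∀ B : Set (Fin I → ℝ), MeasurableSet B →
      σ₂ B = ν {x | 1 < r₂ x ∧ ‖x‖⁻¹ • x ∈ B}) :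
    ∀ B : Set (Fin I → ℝ), MeasurableSet B →
      σ₁ B = ∫⁻ w in B, ENNReal.ofReal ((r₁ w / r₂ w) ^ β) ∂σ₂ :=
  angular_measure_change_of_risk_general ν β hβ hν_hom r₁ r₂ hr₁_cont hr₂_cont hr₁_hom hr₂_hom
    hr₁_pos hr₂_pos σ₁ σ₂ hσ₁ hσ₂
end

section
/- Let ν be a Borel measure on ℝ₊^I \ {0} homogeneous of order -1 and let r be a 1-homogeneous measurable functional with 0 < ν{x : r(x) > 1} < ∞. Then under ν, conditioned on {r(x) > 1}, the radius r(x) and the angle x/‖x‖ are independent, with r(x) distributed Pareto(1): ν{x : r(x) > ρ, x/‖x‖ ∈ B} = ρ⁻¹ · ν{x : r(x) > 1, x/‖x‖ ∈ B} for all ρ ≥ 1 and Borel B on the unit sphere. -/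
/-! The event `{ρ < r x, x / ‖x‖ ∈ B}` is the dilate by `ρ` of `{1 < r x, x / ‖x‖ ∈ B}`,
because `r` is 1-homogeneous and the angle is scale invariant; the (-1)-homogeneity of `ν`
then produces the factor `ρ⁻¹`. -/

open MeasureTheory Pointwise

section

variable {E : Type*} [NormedAddCommGroup E] [NormedSpace ℝ E]

lemma inv_norm_smul_smul_of_pos {c : ℝ} (hc : 0 < c) (x : E) :
    ‖c • x‖⁻¹ • (c • x) = ‖x‖⁻¹ • x := by
  rw [norm_smul, Real.norm_of_nonneg hc.le, smul_smul, mul_inv_rev, mul_assoc,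
    inv_mul_cancel₀ hc.ne', mul_one]

lemma smul_setOf_lt_and_inv_norm_smul_mem {r : E → ℝ}
    (hr : ∀ (a : ℝ) (x : E), 0 < a → r (a • x) = a * r x) {ρ : ℝ} (hρ : 0 < ρ)
    (a : ℝ) (B : Set E) :
    ρ • {x | a < r x ∧ ‖x‖⁻¹ • x ∈ B} = {x | ρ * a < r x ∧ ‖x‖⁻¹ • x ∈ B} := by
  ext x
  rw [← Set.preimage_smul_inv₀ hρ.ne']
  simp only [Set.mem_preimage, Set.mem_ofPred_eq, hr _ x (inv_pos.2 hρ),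
    inv_norm_smul_smul_of_pos (inv_pos.2 hρ), lt_inv_mul_iff₀ hρ]

end

theorem radius_angle_factorization_general {I : ℕ}
    (ν : Measure (Fin I → ℝ))
    (hν_hom : ∀ t : ℝ, 0 < t → ∀ A : Set (Fin I → ℝ), MeasurableSet A →
      ν (t • A) = ENNReal.ofReal t⁻¹ * ν A)
    (r : (Fin I → ℝ) → ℝ) (hr_meas : Measurable r)
    (hr_hom : ∀ (a : ℝ) (x : Fin I → ℝ), 0 < a → r (a • x) = a * r x) :
    ∀ ρ : ℝ, 1 ≤ ρ → ∀ B : Set (Fin I → ℝ), MeasurableSet B →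
      ν {x | ρ < r x ∧ ‖x‖⁻¹ • x ∈ B} =
        ENNReal.ofReal ρ⁻¹ * ν {x | 1 < r x ∧ ‖x‖⁻¹ • x ∈ B} := by
  intro ρ hρ B hB
  have hρ_pos : 0 < ρ := one_pos.trans_le hρ
  have hS : MeasurableSet {x : Fin I → ℝ | 1 < r x ∧ ‖x‖⁻¹ • x ∈ B} :=
    (measurableSet_lt measurable_const hr_meas).inter (measurable_norm.inv.smul measurable_id hB)
  calc ν {x | ρ < r x ∧ ‖x‖⁻¹ • x ∈ B}
      = ν (ρ • {x | 1 < r x ∧ ‖x‖⁻¹ • x ∈ B}) := by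
        rw [smul_setOf_lt_and_inv_norm_smul_mem hr_hom hρ_pos, mul_one]
    _ = ENNReal.ofReal ρ⁻¹ * ν {x | 1 < r x ∧ ‖x‖⁻¹ • x ∈ B} := hν_hom ρ hρ_pos _ hS

/-- Pseudo-polar factorization of a (-1)-homogeneous measure: conditioned on
{r(x) > 1}, the radius r(x) is Pareto(1) and independent of the angle x/‖x‖. -/
theorem radius_angle_factorization {I : ℕ}
    (ν : Measure (Fin I → ℝ))
    (hν_hom : ∀ t : ℝ, 0 < t → ∀ A : Set (Fin I → ℝ), MeasurableSet A →
      ν (t • A) = ENNReal.ofReal t⁻¹ * ν A)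
    (hν_orthant : ∀ᵐ x ∂ν, ∀ i, 0 ≤ x i)
    (r : (Fin I → ℝ) → ℝ) (hr_meas : Measurable r)
    (hr_hom : ∀ (a : ℝ) (x : Fin I → ℝ), 0 < a → r (a • x) = a * r x)
    (h_fin : ν {x | 1 < r x} < ⊤) (h_pos : 0 < ν {x | 1 < r x}) :
    ∀ ρ : ℝ, 1 ≤ ρ → ∀ B : Set (Fin I → ℝ), MeasurableSet B →
      ν {x | ρ < r x ∧ ‖x‖⁻¹ • x ∈ B} =
        ENNReal.ofReal ρ⁻¹ * ν {x | 1 < r x ∧ ‖x‖⁻¹ • x ∈ B} :=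
  radius_angle_factorization_general ν hν_hom r hr_meas hr_hom
end
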